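/- Let A ∈ ℝ^{m×n}, U ∈ ℝ^{m×r} with UᵀU = I_r, V ∈ ℝ^{r×n} and Q ∈ ℝ^{s×n} with VVᵀ = I_r, QQᵀ = I_s, VQᵀ = 0, S ∈ ℝ^{r×r}, E ∈ ℝ^{m×n} with A = U S V + E and UᵀE = 0, and B = P V + L Q ∈ ℝ^{p×n}. Let S′ = [[S, 0], [P, L]] ∈ ℝ^{(r+p)×(r+s)} and suppose S′ = U′ S̃ V′ + E′. Define Ũ = blkdiag(U, I_p)·U′, Ṽ = V′·[V; Q], and Ã = [A; B]. If ‖E‖_F ≤ ε‖A‖_F and ‖E′‖_F ≤ ε‖B‖_F for some ε ≥ 0, then ‖Ã − Ũ S̃ Ṽ‖_F ≤ ε‖Ã‖_F. -/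

import Mathlib

open Matrix BigOperators

/-- Squared Frobenius norm of a real matrix. -/
noncomputable def frobSq {m n : Type*} [Fintype m] [Fintype n] (M : Matrix m n ℝ) : ℝ :=
  ∑ i, ∑ j, (M i j) ^ 2

/-- Frobenius norm of a real matrix. -/
noncomputable def frob {m n : Type*} [Fintype m] [Fintype n] (M : Matrix m n ℝ) : ℝ :=
  Real.sqrt (frobSq M)

/-!
Stacking the two factorizations, `blkdiag(U, I) S' [V; Q] = [A - E; B]`, so the residual is
`[E; 0] + blkdiag(U, I) E' [V; Q]`. Since `blkdiag(U, I)` has orthonormal columns orthogonal to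
`[E; 0]` (because `Uᵀ E = 0`) and `[V; Q]` has orthonormal rows, the squared residual is exactly
`‖E‖² + ‖E'‖² ≤ ε² (‖A‖² + ‖B‖²) = ε² ‖[A; B]‖²`.
-/

section Frobenius

variable {k m n : Type*} [Fintype k] [Fintype m] [Fintype n]

lemma frobSq_eq_trace_transpose_mul (M : Matrix m n ℝ) : frobSq M = (Mᵀ * M).trace := by
  simp only [frobSq, trace, diag, mul_apply, transpose_apply, sq]
  exact Finset.sum_comm

lemma frobSq_eq_trace_mul_transpose (M : Matrix m n ℝ) : frobSq M = (M * Mᵀ).trace := by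
  rw [frobSq_eq_trace_transpose_mul, trace_mul_comm]

lemma frobSq_nonneg (M : Matrix m n ℝ) : 0 ≤ frobSq M :=
  Finset.sum_nonneg fun _ _ => Finset.sum_nonneg fun _ _ => sq_nonneg _

lemma frobSq_zero : frobSq (0 : Matrix m n ℝ) = 0 := by
  simp [frobSq]

lemma frobSq_fromRows (X : Matrix m n ℝ) (Y : Matrix k n ℝ) :
    frobSq (fromRows X Y) = frobSq X + frobSq Y := by
  simp [frobSq, Fintype.sum_sum_type]

lemma frobSq_mul_of_mul_transpose_eq_one [DecidableEq n] (N : Matrix m n ℝ) {W : Matrix n k ℝ}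
    (hW : W * Wᵀ = 1) : frobSq (N * W) = frobSq N := by
  rw [frobSq_eq_trace_mul_transpose, transpose_mul, ← Matrix.mul_assoc, Matrix.mul_assoc N, hW,
    Matrix.mul_one, ← frobSq_eq_trace_mul_transpose]

lemma frobSq_add_mul_of_transpose_mul_eq_zero [DecidableEq m] {X : Matrix k n ℝ}
    {U : Matrix k m ℝ} (Y : Matrix m n ℝ) (hU : Uᵀ * U = 1) (hUX : Uᵀ * X = 0) :
    frobSq (X + U * Y) = frobSq X + frobSq Y := by
  have hXU : Xᵀ * U = 0 := by simpa using congrArg transpose hUX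
  have hGram : (X + U * Y)ᵀ * (X + U * Y) = Xᵀ * X + Yᵀ * Y := by
    simp only [transpose_add, transpose_mul, Matrix.add_mul, Matrix.mul_add, Matrix.mul_assoc]
    rw [← Matrix.mul_assoc Uᵀ, hU, hUX, ← Matrix.mul_assoc Xᵀ, hXU]
    simp
  rw [frobSq_eq_trace_transpose_mul, hGram, trace_add, ← frobSq_eq_trace_transpose_mul,
    ← frobSq_eq_trace_transpose_mul]

lemma frob_le_mul_frob_iff {l : Type*} [Fintype l] {X : Matrix m n ℝ} {Y : Matrix k l ℝ}
    {ε : ℝ} (hε : 0 ≤ ε) :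
    frob X ≤ ε * frob Y ↔ frobSq X ≤ ε ^ 2 * frobSq Y := by
  rw [frob, frob, ← Real.sqrt_le_sqrt_iff (mul_nonneg (sq_nonneg ε) (frobSq_nonneg Y)),
    Real.sqrt_mul (sq_nonneg ε), Real.sqrt_sq hε]

end Frobenius

section Blocks

variable {R : Type*} {m n r s p : Type*}

lemma fromRows_mul_transpose_fromRows_eq_one [CommRing R] [Fintype n] [DecidableEq r]
    [DecidableEq s] {V : Matrix r n R} {Q : Matrix s n R} (hV : V * Vᵀ = 1) (hQ : Q * Qᵀ = 1)
    (hVQ : V * Qᵀ = 0) : fromRows V Q * (fromRows V Q)ᵀ = 1 := by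
  have hQV : Q * Vᵀ = 0 := by simpa using congrArg transpose hVQ
  rw [transpose_fromRows, fromRows_mul_fromCols, hV, hQ, hVQ, hQV, fromBlocks_one]

lemma transpose_mul_fromBlocks_one_eq_one [CommRing R] [Fintype m] [Fintype p] [DecidableEq r]
    [DecidableEq p] {U : Matrix m r R} (hU : Uᵀ * U = 1) :
    (fromBlocks U 0 0 (1 : Matrix p p R))ᵀ * fromBlocks U 0 0 (1 : Matrix p p R) = 1 := by
  simp [fromBlocks_transpose, fromBlocks_multiply, hU, fromBlocks_one]

lemma fromRows_sub_fromBlocks_mul_eq [Ring R] [Fintype m] [Fintype r] [Fintype s] [Fintype p]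
    [DecidableEq p] {A E : Matrix m n R} {U : Matrix m r R} {S : Matrix r r R} {V : Matrix r n R}
    {Q : Matrix s n R} {B : Matrix p n R} {P : Matrix p r R} {L : Matrix p s R}
    {M E' : Matrix (r ⊕ p) (r ⊕ s) R}
    (hA : A = U * S * V + E) (hB : B = P * V + L * Q) (hS' : fromBlocks S 0 P L = M + E') :
    fromRows A B - fromBlocks U 0 0 (1 : Matrix p p R) * M * fromRows V Q =
      fromRows E 0 + fromBlocks U 0 0 (1 : Matrix p p R) * (E' * fromRows V Q) := by
  rw [eq_sub_of_add_eq hS'.symm]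
  ext (i | i) j <;>
    simp [hA, hB, fromBlocks_multiply, fromBlocks_mul_fromRows, Matrix.sub_mul, Matrix.mul_sub,
      Matrix.mul_assoc]

end Blocks

/-- Relative-error guarantee of the incremental SVD update. -/
theorem incremental_svd_relative_error
    {m n r s p rt : ℕ}
    (A E : Matrix (Fin m) (Fin n) ℝ)
    (U : Matrix (Fin m) (Fin r) ℝ)
    (V : Matrix (Fin r) (Fin n) ℝ)
    (Q : Matrix (Fin s) (Fin n) ℝ)
    (S : Matrix (Fin r) (Fin r) ℝ)
    (B : Matrix (Fin p) (Fin n) ℝ)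
    (P : Matrix (Fin p) (Fin r) ℝ)
    (L : Matrix (Fin p) (Fin s) ℝ)
    (U' : Matrix (Fin r ⊕ Fin p) (Fin rt) ℝ)
    (St : Matrix (Fin rt) (Fin rt) ℝ)
    (V' : Matrix (Fin rt) (Fin r ⊕ Fin s) ℝ)
    (E' : Matrix (Fin r ⊕ Fin p) (Fin r ⊕ Fin s) ℝ)
    (hU : Uᵀ * U = 1)
    (hV : V * Vᵀ = 1)
    (hQ : Q * Qᵀ = 1)
    (hVQ : V * Qᵀ = 0)
    (hA : A = U * S * V + E)
    (hUE : Uᵀ * E = 0)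
    (hB : B = P * V + L * Q)
    (hS' : Matrix.fromBlocks S 0 P L = U' * St * V' + E')
    (ε : ℝ) (hε : 0 ≤ ε)
    (hE : frob E ≤ ε * frob A)
    (hE' : frob E' ≤ ε * frob B) :
    frob (Matrix.fromRows A B -
        Matrix.fromBlocks U 0 0 (1 : Matrix (Fin p) (Fin p) ℝ) * U' * St *
          (V' * Matrix.fromRows V Q)) ≤
      ε * frob (Matrix.fromRows A B) := by
  have hUbE : (fromBlocks U 0 0 (1 : Matrix (Fin p) (Fin p) ℝ))ᵀ *
      fromRows E (0 : Matrix (Fin p) (Fin n) ℝ) = 0 := by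
    simp [fromBlocks_transpose, fromBlocks_mul_fromRows, hUE]
  have hResidual := fromRows_sub_fromBlocks_mul_eq hA hB hS'
  simp only [Matrix.mul_assoc] at hResidual ⊢
  rw [frob_le_mul_frob_iff hε] at hE hE' ⊢
  rw [hResidual, frobSq_add_mul_of_transpose_mul_eq_zero (E' * fromRows V Q)
      (transpose_mul_fromBlocks_one_eq_one hU) hUbE,
    frobSq_mul_of_mul_transpose_eq_one _ (fromRows_mul_transpose_fromRows_eq_one hV hQ hVQ),
    frobSq_fromRows, frobSq_fromRows, frobSq_zero, add_zero]
  linarith
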